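/- arXiv:1509.04449 — 5 statements merged into one kernel-verified Lean document; each statement's English description precedes it below -/
import Mathlib

section
/- Let F be a finitely generated nontrivial free group and let H be a subgroup of finite index in F. Then r̄(H) = r̄(F) · [F : H], where [F : H] denotes the index of H in F. -/
/-- The rank of a group: the minimal cardinality of a (finite) generating set. -/
noncomputable def grank (G : Type*) [Group G] : ℕ :=
  sInf {n : ℕ | ∃ S : Finset G, S.card = n ∧ Subgroup.closure (S : Set G) = ⊤}

/-- The reduced rank of a group: `max (0, rank - 1)` (truncated subtraction). -/
noncomputable def rbar (G : Type*) [Group G] : ℕ := grank G - 1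

/-!
Count homomorphisms into a group `Q` of order two. A free group with a basis of `k` elements has
`2 ^ k` of them, and a generating set `S` gives at most `2 ^ |S|`, so the rank is the size of a
basis. For `H` of index `n` in `F` free on `r` generators, the action groupoid of `F` on `F ⧸ H`
is free on `n * r` arrows, has `n` vertices and vertex group `H`. A functor from a connected
groupoid to `Q` amounts to a homomorphism from the vertex group together with the images of
chosen arrows from the base vertex to the `n - 1` others, hence
`2 ^ rank H * 2 ^ (n - 1) = 2 ^ (n * r)`.
-/

universe u v

open CategoryTheory

namespace FreeGroupBasis

variable {ι G : Type*} [Group G]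

lemma closure_range_eq_top (b : FreeGroupBasis ι G) : Subgroup.closure (Set.range b) = ⊤ := by
  have : Set.range b = b.repr.symm '' Set.range FreeGroup.of := by
    rw [← Set.range_comp]; rfl
  rw [this, ← MulEquiv.coe_toMonoidHom, ← MonoidHom.map_closure, FreeGroup.closure_range_of,
    ← MonoidHom.range_eq_map, MonoidHom.range_eq_top]
  exact b.repr.symm.surjective

lemma finite_and_card_le_of_closure_eq_top (b : FreeGroupBasis ι G) {S : Finset G}
    (hS : Subgroup.closure (S : Set G) = ⊤) : Finite ι ∧ Nat.card ι ≤ S.card := by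
  let restrict : (ι → Multiplicative (ZMod 2)) → (S → Multiplicative (ZMod 2)) :=
    fun f s => b.lift f s
  have h_inj : restrict.Injective := fun f g hfg =>
    b.lift.injective <| MonoidHom.eq_of_eqOn_dense hS fun s hs => congrFun hfg ⟨s, hs⟩
  have : Finite (ι → Multiplicative (ZMod 2)) := Finite.of_injective _ h_inj
  have : Finite ι := by
    by_contra h
    rw [not_finite_iff_infinite] at h
    exact not_finite (ι → Multiplicative (ZMod 2))
  refine ⟨this, (Nat.pow_le_pow_iff_right one_lt_two).1 ?_⟩
  simpa [Nat.card_fun] using Nat.card_le_card_of_injective _ h_inj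

lemma finite_of_fg [Group.FG G] (b : FreeGroupBasis ι G) : Finite ι :=
  let ⟨_, hS⟩ := Group.fg_def.1 ‹_›
  (b.finite_and_card_le_of_closure_eq_top hS).1

lemma grank_eq_card [Finite ι] (b : FreeGroupBasis ι G) : grank G = Nat.card ι := by
  classical
  have : Fintype ι := Fintype.ofFinite ι
  have h_range : ∃ S : Finset G, S.card = Nat.card ι ∧ Subgroup.closure (S : Set G) = ⊤ :=
    ⟨Finset.univ.image b, by
      rw [Finset.card_image_of_injective _ b.injective, Finset.card_univ,
        Nat.card_eq_fintype_card],
      by simpa using b.closure_range_eq_top⟩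
  refine le_antisymm (Nat.sInf_le h_range) (le_csInf ⟨_, h_range⟩ ?_)
  rintro n ⟨S, rfl, hS⟩
  exact (b.finite_and_card_le_of_closure_eq_top hS).2

lemma card_monoidHom [Finite ι] {Q : Type*} [Group Q] (b : FreeGroupBasis ι G) :
    Nat.card (G →* Q) = Nat.card Q ^ Nat.card ι := by
  rw [← Nat.card_congr b.lift, Nat.card_fun]

end FreeGroupBasis

namespace CategoryTheory.Groupoid

variable {G : Type*} [Groupoid G] [IsPreconnected G] (x : G)

noncomputable def arrowFrom (v : G) : x ⟶ v :=
  open Classical in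
  if h : x = v then eqToHom h else (nonempty_hom_of_preconnected_groupoid x v).some

@[simp] lemma arrowFrom_self : arrowFrom x x = 𝟙 x := by simp [arrowFrom]

variable (Q : Type*) [Group Q]

open Classical in
noncomputable def functorSingleObjEquiv :
    (G ⥤ SingleObj Q) ≃ (End x →* Q) × ({v // v ≠ x} → Q) where
  toFun Φ := (⟨⟨fun a => (Φ.map a : Q), Φ.map_id x⟩, fun a b => Φ.map_comp b a⟩,
    fun v => Φ.map (arrowFrom x v))
  invFun p :=
    let q (v : G) : Q := if h : v = x then 1 else p.2 ⟨v, h⟩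
    { obj _ := SingleObj.star Q
      map {v w} f := (q w * p.1 (arrowFrom x v ≫ f ≫ inv (arrowFrom x w)) * (q v)⁻¹ : Q)
      map_id v := by
        have : arrowFrom x v ≫ 𝟙 v ≫ inv (arrowFrom x v) = (1 : End x) := by
          simp [End.one_def]
        rw [SingleObj.id_as_one, this, map_one, mul_one, mul_inv_cancel]
      map_comp {u v w} f g := by
        have hE : ∀ a b : End x, p.1 (a ≫ b) = p.1 b * p.1 a := fun a b => p.1.map_mul b a
        have : arrowFrom x u ≫ (f ≫ g) ≫ inv (arrowFrom x w) =
            (arrowFrom x u ≫ f ≫ inv (arrowFrom x v)) ≫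
              arrowFrom x v ≫ g ≫ inv (arrowFrom x w) := by
          simp
        rw [SingleObj.comp_as_mul, this, hE]
        group }
  left_inv Φ := by
    have hq (v : G) :
        (if v = x then 1 else Φ.map (arrowFrom x v) : Q) = Φ.map (arrowFrom x v) := by
      split_ifs with h
      · subst h; rw [arrowFrom_self, Φ.map_id]; rfl
      · rfl
    refine Functor.ext (fun _ => rfl) fun v w f => ?_
    simp only [dite_eq_ite, hq, Groupoid.inv_eq_inv, MonoidHom.coe_mk, OneHom.coe_mk,
      eqToHom_refl, Category.id_comp, Category.comp_id, Functor.map_comp, Functor.map_inv,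
      SingleObj.comp_as_mul, SingleObj.inv_as_inv]
    group
  right_inv p := by
    refine Prod.ext (MonoidHom.ext fun a => ?_) (funext fun v => ?_)
    · simp
    · simpa [v.2] using p.1.map_one

variable [Finite G]

lemma card_functor_singleObj :
    Nat.card (G ⥤ SingleObj Q) = Nat.card (End x →* Q) * Nat.card Q ^ (Nat.card G - 1) := by
  classical
  have h : Nat.card {v // v ≠ x} + 1 = Nat.card G := by
    rw [← Finite.card_option, Nat.card_congr (Equiv.optionSubtypeNe x)]
  rw [Nat.card_congr (functorSingleObjEquiv x Q), Nat.card_prod, Nat.card_fun, ← h,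
    Nat.add_sub_cancel]

end CategoryTheory.Groupoid

namespace IsFreeGroupoid

variable {G : Type u} [Groupoid.{v} G] [IsFreeGroupoid G] (Q : Type v) [Group Q]

noncomputable def functorSingleObjEquiv :
    (G ⥤ SingleObj Q) ≃ (Quiver.Total (Generators G) → Q) :=
  Equiv.ofBijective (fun Φ t => Φ.map (of t.hom))
    ⟨fun Φ Ψ h => ext_functor Φ Ψ fun a b e => congrFun h ⟨a, b, e⟩, fun f =>
      let ⟨Φ, hΦ, _⟩ := unique_lift fun a b e => f ⟨a, b, e⟩
      ⟨Φ, funext fun t => hΦ t.left t.right t.hom⟩⟩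

lemma card_functor_singleObj [Finite (Quiver.Total (Generators G))] :
    Nat.card (G ⥤ SingleObj Q) = Nat.card Q ^ Nat.card (Quiver.Total (Generators G)) := by
  rw [Nat.card_congr (functorSingleObjEquiv Q), Nat.card_fun]

end IsFreeGroupoid

namespace CategoryTheory.ActionCategory

variable (F A : Type u) [Group F] [IsFreeGroup F] [MulAction F A]

noncomputable def totalGeneratorsEquiv :
    Quiver.Total (IsFreeGroupoid.Generators (ActionCategory F A)) ≃
      A × IsFreeGroup.Generators F where
  toFun t := ((t.left : ActionCategory F A).back, t.hom.val)
  invFun p := ⟨objEquiv F A p.1, objEquiv F A (IsFreeGroup.of p.2 • p.1), ⟨p.2, rfl⟩⟩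
  left_inv := by
    rintro ⟨⟨⟨⟩, a : A⟩, ⟨⟨⟩, b : A⟩, e, h : IsFreeGroup.of e • a = b⟩
    subst h
    rfl
  right_inv _ := rfl

end CategoryTheory.ActionCategory

open IsFreeGroup in
theorem Subgroup.card_generators_add_index {F : Type u} [Group F] [IsFreeGroup F]
    [Finite (Generators F)] (H : Subgroup F) [H.FiniteIndex] [Finite (Generators H)] :
    Nat.card (Generators H) + H.index = H.index * Nat.card (Generators F) + 1 := by
  obtain ⟨Q, _, _, hQ⟩ : ∃ (Q : Type u) (_ : Group Q) (_ : Finite Q), Nat.card Q = 2 :=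
    ⟨ULift (Multiplicative (ZMod 2)), inferInstance, inferInstance, by simp⟩
  -- `IsConnected` is registered for the derived category structure of `ActionCategory`,
  -- while the groupoid lemmas see it through `Groupoid.toCategory`.
  have : @IsPreconnected (ActionCategory F (F ⧸ H)) Groupoid.toCategory :=
    inferInstanceAs (IsPreconnected (ActionCategory F (F ⧸ H)))
  let x := ActionCategory.objEquiv F (F ⧸ H) ↑(1 : F)
  have : Finite (ActionCategory F (F ⧸ H)) := .of_equiv _ (ActionCategory.objEquiv F (F ⧸ H))
  have : Finite (Quiver.Total (IsFreeGroupoid.Generators (ActionCategory F (F ⧸ H)))) :=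
    .of_equiv _ (ActionCategory.totalGeneratorsEquiv F (F ⧸ H)).symm
  have h_vertices : Nat.card (ActionCategory F (F ⧸ H)) = H.index :=
    (Nat.card_congr (ActionCategory.objEquiv F (F ⧸ H))).symm
  have h_arrows : Nat.card (Quiver.Total (IsFreeGroupoid.Generators (ActionCategory F (F ⧸ H)))) =
      H.index * Nat.card (Generators F) := by
    rw [Nat.card_congr (ActionCategory.totalGeneratorsEquiv F (F ⧸ H)), Nat.card_prod]; rfl
  have h_vertexGroup : Nat.card (End x →* Q) = Nat.card Q ^ Nat.card (Generators H) := by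
    rw [Nat.card_congr (MulEquiv.monoidHomCongrLeftEquiv (ActionCategory.endMulEquivSubgroup H)),
      (IsFreeGroup.basis H).card_monoidHom]
  have h_count : Nat.card Q ^ Nat.card (Generators H) * Nat.card Q ^ (H.index - 1) =
      Nat.card Q ^ (H.index * Nat.card (Generators F)) := by
    rw [← h_vertexGroup, ← h_arrows, ← h_vertices]
    exact (Groupoid.card_functor_singleObj x Q).symm.trans
      (IsFreeGroupoid.card_functor_singleObj Q)
  rw [hQ, ← pow_add] at h_count
  have := Nat.pow_right_injective le_rfl h_count
  have := H.index_ne_zero_of_finite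
  omega

theorem rbar_of_finite_index_general (F : Type*) [Group F] [IsFreeGroup F] [Group.FG F]
    (H : Subgroup F) (hHind : H.FiniteIndex) :
    rbar ↥H = rbar F * H.index := by
  have : Finite (IsFreeGroup.Generators F) := (IsFreeGroup.basis F).finite_of_fg
  have : Finite (IsFreeGroup.Generators H) := (IsFreeGroup.basis H).finite_of_fg
  have h_schreier := H.card_generators_add_index
  have := H.index_ne_zero_of_finite
  rw [rbar, rbar, (IsFreeGroup.basis H).grank_eq_card, (IsFreeGroup.basis F).grank_eq_card,
    Nat.sub_one_mul, mul_comm]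
  omega

/-- If `F` is a finitely generated nontrivial free group and `H` has finite index in `F`,
then `r̄(H) = r̄(F) · [F : H]`. -/
theorem rbar_of_finite_index (F : Type*) [Group F] [IsFreeGroup F] [Group.FG F] [Nontrivial F]
    (H : Subgroup F) (hHind : H.FiniteIndex) :
    rbar ↥H = rbar F * H.index :=
  rbar_of_finite_index_general F H hHind
end

section
/- There exist a finitely generated free group F and finitely generated subgroups H, K of F such that r̄(H ∨ K) · r̄(H ∩ K) > r̄(H) · r̄(K). That is, the inequality r̄(H ∨ K) · r̄(H ∩ K) ≤ r̄(H) · r̄(K) fails in general for finitely generated subgroups of free groups. -/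
/-!
In `F = F(a, b, c)` take `H = ⟨a, b⟩` and `K = ⟨b, aba⁻¹, a²ba⁻², c⟩`, so `r̄(H) r̄(K) ≤ 1 · 3`.
The join is `F`, of reduced rank 2. The retraction of `F` onto `⟨a, b⟩` killing `c` fixes `H` and
maps `K` into `L = ⟨b, aba⁻¹, a²ba⁻²⟩`, so `H ∩ K = L`. In `(ℤ/2)³ ⋊ ℤ`, with `ℤ` shifting the
coordinates cyclically, sending `a` to the generator of `ℤ` and `b` to a basis vector maps `L` onto
`(ℤ/2)³`, so `L` also has reduced rank at least 2, and `2 · 2 > 1 · 3`. All rank lower bounds come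
from surjections onto `𝔽₂`-vector spaces, whose rank is at least their dimension.
-/

open Multiplicative

section grank

variable {G Q : Type*} [Group G] [Group Q]

theorem grank_le_card {S : Finset G} (hS : Subgroup.closure (S : Set G) = ⊤) :
    grank G ≤ S.card :=
  Nat.sInf_le ⟨S, rfl, hS⟩

theorem exists_finset_card_eq_grank [hG : Group.FG G] :
    ∃ S : Finset G, S.card = grank G ∧ Subgroup.closure (S : Set G) = ⊤ := by
  obtain ⟨S, hS⟩ := Group.fg_def.1 hG
  exact Nat.sInf_mem (⟨S.card, S, rfl, hS⟩ :
    {n : ℕ | ∃ S : Finset G, S.card = n ∧ Subgroup.closure (S : Set G) = ⊤}.Nonempty)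

theorem grank_closure_le (s : Finset G) : grank (Subgroup.closure (s : Set G)) ≤ s.card := by
  classical
  calc grank (Subgroup.closure (s : Set G))
        ≤ (s.preimage Subtype.val Subtype.val_injective.injOn).card :=
        grank_le_card (by rw [Finset.coe_preimage]; exact Subgroup.closure_closure_coe_preimage)
    _ ≤ s.card := by rw [Finset.card_preimage]; exact Finset.card_filter_le _ _

theorem grank_le_of_surjective [Group.FG G] {f : G →* Q} (hf : Function.Surjective f) :
    grank Q ≤ grank G := by
  classical
  obtain ⟨S, hcard, hS⟩ := exists_finset_card_eq_grank (G := G)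
  have hgen : Subgroup.closure ((S.image f : Finset Q) : Set Q) = ⊤ := by
    rw [Finset.coe_image, ← MonoidHom.map_closure, hS, ← MonoidHom.range_eq_map,
      MonoidHom.range_eq_top.2 hf]
  calc grank Q ≤ (S.image f).card := grank_le_card hgen
    _ ≤ S.card := Finset.card_image_le
    _ = grank G := hcard

theorem grank_le_of_map_eq_range {P N : Type*} [Group P] [Group N] {L : Subgroup P} [Group.FG L]
    {φ : P →* Q} {ι : N →* Q} (hι : Function.Injective ι) (h : L.map φ = ι.range) :
    grank N ≤ grank L :=
  let e : L.map φ ≃* N := (MulEquiv.subgroupCongr h).trans (MonoidHom.ofInjective hι).symm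
  grank_le_of_surjective (f := e.toMonoidHom.comp (φ.subgroupMap L))
    (e.surjective.comp (φ.subgroupMap_surjective L))

theorem finrank_le_grank {K V : Type*} [DivisionRing K] [AddCommGroup V] [Module K V]
    [Group.FG (Multiplicative V)] : Module.finrank K V ≤ grank (Multiplicative V) := by
  obtain ⟨S, hcard, hS⟩ := exists_finset_card_eq_grank (G := Multiplicative V)
  set T : Finset V := S.preimage ofAdd ofAdd.injective.injOn
  have hclosure : AddSubgroup.closure (T : Set V) = ⊤ := by
    simpa [T, Subgroup.toAddSubgroup'_closure] using congrArg Subgroup.toAddSubgroup' hS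
  have hspan : Submodule.span K (T : Set V) = ⊤ := by
    refine eq_top_iff.2 fun v _ => ?_
    have hv : v ∈ AddSubgroup.closure (T : Set V) := hclosure ▸ AddSubgroup.mem_top v
    exact (AddSubgroup.closure_le (Submodule.span K (T : Set V)).toAddSubgroup).2
      Submodule.subset_span hv
  calc Module.finrank K V = (T : Set V).finrank K := by
        rw [Set.finrank, hspan, finrank_top]
    _ ≤ T.card := finrank_span_finset_le_card T
    _ ≤ S.card := by classical rw [Finset.card_preimage]; exact Finset.card_filter_le _ _
    _ = grank (Multiplicative V) := hcard

theorem closure_range_ofAdd_single {ι : Type*} [Finite ι] [DecidableEq ι] (n : ℕ) :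
    Subgroup.closure (Set.range fun i : ι => ofAdd (Pi.single i (1 : ZMod n))) = ⊤ := by
  apply Subgroup.toAddSubgroup'.injective
  rw [Subgroup.toAddSubgroup'_closure, ← Submodule.span_int_eq_addSubgroupClosure,
    ← Submodule.restrictScalars_span ℤ (ZMod n) (ZMod.intCast_surjective)]
  simpa [Set.preimage, Set.range] using (Pi.basisFun (ZMod n) ι).span_eq

theorem grank_le_grank_top [Group.FG G] : grank G ≤ grank (⊤ : Subgroup G) :=
  grank_le_of_surjective (f := (Subgroup.topEquiv (G := G)).toMonoidHom)
    Subgroup.topEquiv.surjective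

end grank

theorem card_le_grank_freeGroup {ι : Type*} [Fintype ι] [DecidableEq ι] :
    Fintype.card ι ≤ grank (FreeGroup ι) := by
  let f : FreeGroup ι →* Multiplicative (ι → ZMod 2) :=
    FreeGroup.lift fun i => ofAdd (Pi.single i 1)
  have hf : Function.Surjective f := MonoidHom.range_eq_top.1 <| by
    rw [FreeGroup.range_lift_eq_closure]; exact closure_range_ofAdd_single 2
  calc Fintype.card ι = Module.finrank (ZMod 2) (ι → ZMod 2) :=
        (Module.finrank_fintype_fun_eq_card _).symm
    _ ≤ grank (Multiplicative (ι → ZMod 2)) := finrank_le_grank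
    _ ≤ grank (FreeGroup ι) := grank_le_of_surjective hf

namespace IEHNC

def a : FreeGroup (Fin 3) := .of 0
def b : FreeGroup (Fin 3) := .of 1
def c : FreeGroup (Fin 3) := .of 2

def b₁ : FreeGroup (Fin 3) := a * b * a⁻¹
def b₂ : FreeGroup (Fin 3) := a * b₁ * a⁻¹

def H : Subgroup (FreeGroup (Fin 3)) := Subgroup.closure (({a, b} : Finset _) : Set _)
def K : Subgroup (FreeGroup (Fin 3)) := Subgroup.closure (({b, b₁, b₂, c} : Finset _) : Set _)
def L : Subgroup (FreeGroup (Fin 3)) := Subgroup.closure (({b, b₁, b₂} : Finset _) : Set _)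

theorem grank_H_le : grank H ≤ 2 := (grank_closure_le _).trans Finset.card_le_two
theorem grank_K_le : grank K ≤ 4 := (grank_closure_le _).trans Finset.card_le_four

def retractH : FreeGroup (Fin 3) →* FreeGroup (Fin 3) := FreeGroup.lift ![a, b, 1]

theorem retractH_c : retractH c = 1 := FreeGroup.lift_apply_of

theorem retractH_eq_self_of_mem_H {x : FreeGroup (Fin 3)} (hx : x ∈ H) : retractH x = x := by
  refine MonoidHom.eqOn_closure (g := MonoidHom.id _) ?_ hx
  intro y hy
  simp only [Finset.coe_insert, Finset.coe_singleton, Set.mem_insert_iff,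
    Set.mem_singleton_iff] at hy
  rcases hy with rfl | rfl
  exacts [FreeGroup.lift_apply_of, FreeGroup.lift_apply_of]

theorem a_mem_H : a ∈ H := Subgroup.subset_closure (by simp)
theorem b_mem_H : b ∈ H := Subgroup.subset_closure (by simp)
theorem b₁_mem_H : b₁ ∈ H := mul_mem (mul_mem a_mem_H b_mem_H) (inv_mem a_mem_H)
theorem b₂_mem_H : b₂ ∈ H := mul_mem (mul_mem a_mem_H b₁_mem_H) (inv_mem a_mem_H)

theorem L_le_H : L ≤ H := by
  rw [L, Subgroup.closure_le]
  intro y hy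
  simp only [Finset.coe_insert, Finset.coe_singleton, Set.mem_insert_iff,
    Set.mem_singleton_iff] at hy
  rcases hy with rfl | rfl | rfl
  exacts [b_mem_H, b₁_mem_H, b₂_mem_H]

theorem L_le_K : L ≤ K :=
  Subgroup.closure_mono <| Finset.coe_subset.2 <| by simp [Finset.insert_subset_iff]

theorem map_retractH_K_le : K.map retractH ≤ L := by
  rw [K, MonoidHom.map_closure, Subgroup.closure_le]
  rintro _ ⟨y, hy, rfl⟩
  simp only [Finset.coe_insert, Finset.coe_singleton, Set.mem_insert_iff,
    Set.mem_singleton_iff] at hy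
  rcases hy with rfl | rfl | rfl | rfl
  · rw [retractH_eq_self_of_mem_H b_mem_H]; exact Subgroup.subset_closure (by simp)
  · rw [retractH_eq_self_of_mem_H b₁_mem_H]; exact Subgroup.subset_closure (by simp)
  · rw [retractH_eq_self_of_mem_H b₂_mem_H]; exact Subgroup.subset_closure (by simp)
  · rw [retractH_c]; exact one_mem L

theorem H_inf_K : H ⊓ K = L :=
  le_antisymm
    (fun x hx => retractH_eq_self_of_mem_H hx.1 ▸ map_retractH_K_le ⟨x, hx.2, rfl⟩)
    (le_inf L_le_H L_le_K)

theorem H_sup_K : H ⊔ K = ⊤ := by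
  rw [eq_top_iff, ← FreeGroup.closure_range_of, Subgroup.closure_le]
  rintro _ ⟨i, rfl⟩
  fin_cases i
  · exact Subgroup.mem_sup_left a_mem_H
  · exact Subgroup.mem_sup_left b_mem_H
  · exact Subgroup.mem_sup_right (Subgroup.subset_closure (by simp [c]))

theorem three_le_grank_sup : 3 ≤ grank ↥(H ⊔ K) := by
  rw [H_sup_K]
  simpa using (card_le_grank_freeGroup (ι := Fin 3)).trans grank_le_grank_top

def shift : MulAut (Multiplicative (Fin 3 → ZMod 2)) :=
  AddEquiv.toMultiplicative
    (LinearEquiv.funCongrLeft (ZMod 2) (ZMod 2) (Equiv.addRight (1 : Fin 3))).toAddEquiv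

theorem shift_single (i : Fin 3) :
    shift (ofAdd (Pi.single i 1)) = ofAdd (Pi.single (i - 1) 1) := by
  ext j
  simp [shift, Pi.single_apply, eq_sub_iff_add_eq]

abbrev Target := Multiplicative (Fin 3 → ZMod 2) ⋊[zpowersHom _ shift] Multiplicative ℤ

def toTarget : FreeGroup (Fin 3) →* Target :=
  FreeGroup.lift ![.inr (ofAdd 1), .inl (ofAdd (Pi.single 0 1)), 1]

theorem toTarget_conj_a {g : FreeGroup (Fin 3)} {i : Fin 3}
    (h : toTarget g = .inl (ofAdd (Pi.single i 1))) :
    toTarget (a * g * a⁻¹) = .inl (ofAdd (Pi.single (i - 1) 1)) := by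
  have ha : toTarget a = .inr (ofAdd 1) := FreeGroup.lift_apply_of
  rw [map_mul, map_mul, map_inv, h, ha, ← map_inv, ← SemidirectProduct.inl_aut, ← shift_single]
  simp

theorem toTarget_b : toTarget b = .inl (ofAdd (Pi.single 0 1)) := FreeGroup.lift_apply_of
theorem toTarget_b₁ : toTarget b₁ = .inl (ofAdd (Pi.single 2 1)) := toTarget_conj_a toTarget_b
theorem toTarget_b₂ : toTarget b₂ = .inl (ofAdd (Pi.single 1 1)) := toTarget_conj_a toTarget_b₁

theorem map_toTarget_L : L.map toTarget = (SemidirectProduct.inl : _ →* Target).range := by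
  apply le_antisymm
  · rw [L, MonoidHom.map_closure, Subgroup.closure_le]
    rintro _ ⟨y, hy, rfl⟩
    simp only [Finset.coe_insert, Finset.coe_singleton, Set.mem_insert_iff,
      Set.mem_singleton_iff] at hy
    rcases hy with rfl | rfl | rfl
    exacts [⟨_, toTarget_b.symm⟩, ⟨_, toTarget_b₁.symm⟩, ⟨_, toTarget_b₂.symm⟩]
  · rw [MonoidHom.range_eq_map, ← closure_range_ofAdd_single 2, MonoidHom.map_closure,
      Subgroup.closure_le]
    rintro _ ⟨_, ⟨i, rfl⟩, rfl⟩
    fin_cases i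
    · exact ⟨b, Subgroup.subset_closure (by simp), toTarget_b⟩
    · exact ⟨b₂, Subgroup.subset_closure (by simp), toTarget_b₂⟩
    · exact ⟨b₁, Subgroup.subset_closure (by simp), toTarget_b₁⟩

instance : Group.FG L := Group.closure_finset_fg _

theorem three_le_grank_L : 3 ≤ grank L :=
  calc 3 = Module.finrank (ZMod 2) (Fin 3 → ZMod 2) := by simp
    _ ≤ grank (Multiplicative (Fin 3 → ZMod 2)) := finrank_le_grank
    _ ≤ grank L := grank_le_of_map_eq_range SemidirectProduct.inl_injective map_toTarget_L

theorem rbar_mul_rbar_lt : rbar H * rbar K < rbar ↥(H ⊔ K) * rbar ↥(H ⊓ K) := by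
  have hH := grank_H_le
  have hK := grank_K_le
  have hsup := three_le_grank_sup
  have hinf := three_le_grank_L
  rw [H_inf_K, rbar, rbar, rbar, rbar]
  calc (grank H - 1) * (grank K - 1) ≤ 1 * 3 := Nat.mul_le_mul (by omega) (by omega)
    _ < 2 * 2 := by norm_num
    _ ≤ _ := Nat.mul_le_mul (by omega) (by omega)

end IEHNC

/-- There are a finitely generated free group (one may take `FreeGroup (Fin n)`) and
finitely generated subgroups `H, K` with `r̄(H ∨ K) · r̄(H ∩ K) > r̄(H) · r̄(K)`:
the inclusion/exclusion Hanna Neumann inequality fails in general. -/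
theorem iehnc_fails :
    ∃ (n : ℕ) (H K : Subgroup (FreeGroup (Fin n))),
      H.FG ∧ K.FG ∧ rbar ↥H * rbar ↥K < rbar ↥(H ⊔ K) * rbar ↥(H ⊓ K) :=
  ⟨3, IEHNC.H, IEHNC.K, ⟨_, rfl⟩, ⟨_, rfl⟩, IEHNC.rbar_mul_rbar_lt⟩
end

section
/- Let ℓ ≥ 1 and v ≥ 2 be integers, and let F be the free group on generators x₁, x₂, …, x_{ℓ+2}. Let H be the subgroup generated by the elements x₁^i x₂ x₁^{-(i+1)} for 0 ≤ i ≤ v−2 together with x₃, x₄, …, x_{ℓ+2}, and let K be the subgroup generated by x₁ and x₂. Then H ∩ K is the subgroup generated by the elements x₁^i x₂ x₁^{-(i+1)} for 0 ≤ i ≤ v−2. -/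
/-! The endomorphism of `F` fixing `x₁, x₂` and killing `x₃, …, x_{ℓ+2}` is a retraction onto `K`.
It maps `H` into the subgroup generated by the `x₁ⁱx₂x₁^{-(i+1)}`, and it fixes every element of
`H ∩ K`, so that intersection lies in that subgroup. -/

namespace Subgroup

variable {G : Type*} [Group G]

theorem closure_union_inf_eq_closure_of_retraction (φ : G →* G) {A B : Set G} {K : Subgroup G}
    (hA : A ⊆ K) (hφK : ∀ g ∈ K, φ g = g) (hφB : ∀ b ∈ B, φ b = 1) :
    closure (A ∪ B) ⊓ K = closure A := by
  refine le_antisymm ?_ (le_inf (closure_mono Set.subset_union_left) ((closure_le K).2 hA))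
  rintro g ⟨hgAB, hgK⟩
  have hφAB : φ '' (A ∪ B) ⊆ closure A := by
    rintro _ ⟨y, hy | hy, rfl⟩
    · rw [hφK y (hA hy)]
      exact subset_closure hy
    · rw [hφB y hy]
      exact one_mem _
  have hφg : φ g ∈ closure A := by
    refine (closure_le _).2 hφAB ?_
    rw [← MonoidHom.map_closure]
    exact mem_map_of_mem φ hgAB
  rwa [hφK g hgK] at hφg

end Subgroup

/-- With `H = ⟨x₁ⁱx₂x₁^{-(i+1)} (0 ≤ i ≤ v-2), x₃, …, x_{ℓ+2}⟩` and `K = ⟨x₁, x₂⟩`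
in the free group on `x₁, …, x_{ℓ+2}`, the intersection `H ∩ K` is generated by
the elements `x₁ⁱx₂x₁^{-(i+1)}` for `0 ≤ i ≤ v-2`. -/
theorem inf_eq_closure (ℓ v : ℕ)
    (x₁ x₂ : FreeGroup (Fin (ℓ + 2)))
    (hx₁ : x₁ = FreeGroup.of ⟨0, by omega⟩)
    (hx₂ : x₂ = FreeGroup.of ⟨1, by omega⟩)
    (H K : Subgroup (FreeGroup (Fin (ℓ + 2))))
    (hH : H = Subgroup.closure
      ({g | ∃ i : ℕ, i ≤ v - 2 ∧ g = x₁ ^ (i : ℤ) * x₂ * x₁ ^ (-((i : ℤ) + 1))} ∪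
       {g | ∃ j : Fin (ℓ + 2), 2 ≤ (j : ℕ) ∧ g = FreeGroup.of j}))
    (hK : K = Subgroup.closure {x₁, x₂}) :
    H ⊓ K = Subgroup.closure
      {g | ∃ i : ℕ, i ≤ v - 2 ∧ g = x₁ ^ (i : ℤ) * x₂ * x₁ ^ (-((i : ℤ) + 1))} := by
  subst hH hK
  set φ : FreeGroup (Fin (ℓ + 2)) →* FreeGroup (Fin (ℓ + 2)) :=
    FreeGroup.lift fun j => if (j : ℕ) ≤ 1 then FreeGroup.of j else 1
  have hx₁K : x₁ ∈ Subgroup.closure {x₁, x₂} := Subgroup.subset_closure (by simp)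
  have hx₂K : x₂ ∈ Subgroup.closure {x₁, x₂} := Subgroup.subset_closure (by simp)
  refine Subgroup.closure_union_inf_eq_closure_of_retraction φ ?_ ?_ ?_
  · rintro _ ⟨i, -, rfl⟩
    exact mul_mem (mul_mem (zpow_mem hx₁K _) hx₂K) (zpow_mem hx₁K _)
  · refine fun g hg => MonoidHom.eqOn_closure (f := φ) (g := MonoidHom.id _) ?_ hg
    rintro _ (rfl | rfl) <;> simp [φ, hx₁, hx₂]
  · rintro _ ⟨j, hj, rfl⟩
    simp [φ, show ¬(j : ℕ) ≤ 1 by omega]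
end

section
/- Let ℓ ≥ 1 and v ≥ 2 be integers, and let F be the free group on generators x₁, x₂, …, x_{ℓ+2}. Let H be the subgroup generated by the elements x₁^i x₂ x₁^{-(i+1)} for 0 ≤ i ≤ v−2 together with x₃, x₄, …, x_{ℓ+2}, and let K be the subgroup generated by x₁ and x₂. Then r̄(H) = v + ℓ − 2 and r̄(K) = 1; in particular rank(H) = v + ℓ − 1 and rank(K) = 2. -/
/-!
A generating set of `n` elements bounds the rank from above. For the lower bound we map the
subgroup to an abelian group in which the images of the generators are `ℤ`-linearly
independent; then any generating set spans a free `ℤ`-module of rank at least `n`. For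
`K = ⟨x₁, x₂⟩` the abelianization of `F` does this. For `H` we map `F` to the wreath product
`ℤ ≀ ℤ`, sending `x₁` to the shift `t`, `x₂` to `δ₀ t`, and `x₃, …, x_{ℓ+2}` to lamps `δ_p` at
distinct negative positions `p`. Then `x₁ⁱ x₂ x₁^{-(i+1)} ↦ tⁱ δ₀ t⁻ⁱ = δᵢ`, so `H` lands in the
abelian base group `ℤ^(ℤ)`, and its generators go to distinct basis vectors there.
-/

open Subgroup Set Multiplicative

theorem grank_eq_rank (G : Type*) [Group G] [Group.FG G] : grank G = Group.rank G :=
  le_antisymm (Nat.sInf_le (Group.rank_spec G)) <|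
    le_csInf ⟨_, Group.rank_spec G⟩ fun _ ⟨_, hS, hS_top⟩ => hS ▸ Group.rank_le hS_top

theorem Group.card_le_rank_of_linearIndependent {G ι M : Type*} [Group G] [Group.FG G]
    [Fintype ι] [AddCommGroup M] (f : G →* Multiplicative M) {b : ι → M}
    (hb : LinearIndependent ℤ b) (hb_range : ∀ i, ofAdd (b i) ∈ f.range) :
    Fintype.card ι ≤ Group.rank G := by
  classical
  obtain ⟨S, hS, hS_top⟩ := Group.rank_spec G
  let w : Finset M := S.image fun g => (f g).toAdd
  have hspan : f.range ≤ AddSubgroup.toSubgroup (Submodule.span ℤ (w : Set M)).toAddSubgroup := by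
    rw [MonoidHom.range_eq_map, ← hS_top, MonoidHom.map_closure, closure_le]
    rintro _ ⟨g, hg, rfl⟩
    exact (mem_toSubgroup _ _).2 (Submodule.subset_span (Finset.mem_image_of_mem _ hg))
  have hcard := linearIndependent_le_span' b hb (w : Set M) (by
    rintro _ ⟨i, rfl⟩
    exact hspan (hb_range i))
  simp only [Cardinal.mk_fintype, Nat.cast_le, Finset.coe_sort_coe, Fintype.card_coe] at hcard
  exact hcard.trans (hS ▸ Finset.card_image_le)

theorem Subgroup.rank_closure_range_eq_card {G ι M : Type*} [Group G] [Fintype ι]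
    [AddCommGroup M] (g : ι → G) (f : closure (range g) →* Multiplicative M)
    (hf : LinearIndependent ℤ fun i => (f ⟨g i, subset_closure (mem_range_self i)⟩).toAdd) :
    Group.rank (closure (range g)) = Fintype.card ι := by
  refine le_antisymm ?_ (Group.card_le_rank_of_linearIndependent f hf fun i => ⟨_, rfl⟩)
  calc Group.rank (closure (range g)) ≤ Nat.card (range g) := rank_closure_finite_le_nat_card _
    _ ≤ Nat.card ι := Finite.card_range_le g
    _ = Fintype.card ι := Nat.card_eq_fintype_card

theorem FreeGroup.rank_closure_range_of {α ι : Type*} [Fintype ι] {p : ι → α}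
    (hp : Function.Injective p) :
    Group.rank (closure (range (FreeGroup.of ∘ p))) = Fintype.card ι := by
  classical
  let f : FreeGroup α →* Multiplicative (α → ℤ) := FreeGroup.lift fun a => ofAdd (Pi.single a 1)
  refine rank_closure_range_eq_card _ (f.comp (Subgroup.subtype _)) ?_
  simp only [f, MonoidHom.coe_comp, Function.comp_apply, coe_subtype, FreeGroup.lift_apply_of,
    toAdd_ofAdd]
  exact (Pi.linearIndependent_single_one α ℤ).comp p hp

namespace RegularWreathProduct

variable {D Q : Type*} [Group D] [Group Q]

def baseHom : (rightHom : D ≀ᵣ Q →* Q).ker →* (Q → D) where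
  toFun w := w.1.left
  map_one' := rfl
  map_mul' a b := by
    have ha : a.1.right = 1 := a.2
    ext x
    simp [ha]

def lamp [DecidableEq Q] (q : Q) (d : D) : D ≀ᵣ Q := ⟨Pi.mulSingle q d, 1⟩

@[simp] theorem left_lamp [DecidableEq Q] (q : Q) (d : D) : (lamp q d).left = Pi.mulSingle q d :=
  rfl

@[simp] theorem right_lamp [DecidableEq Q] (q : Q) (d : D) : (lamp q d).right = 1 := rfl

theorem inl_mul_lamp_mul_inl_inv [DecidableEq Q] (p q : Q) (d : D) :
    inl p * lamp q d * (inl p)⁻¹ = lamp (p * q) d := by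
  ext x
  · simp [lamp, Pi.mulSingle_apply, inv_mul_eq_iff_eq_mul]
  · simp [lamp]

end RegularWreathProduct

open RegularWreathProduct

def lampGen (ℓ : ℕ) (j : Fin (ℓ + 2)) : Multiplicative ℤ ≀ᵣ Multiplicative ℤ :=
  if (j : ℕ) = 0 then inl (ofAdd 1)
  else if (j : ℕ) = 1 then lamp 1 (ofAdd 1) * inl (ofAdd 1)
  else lamp (ofAdd (-(j : ℤ))) (ofAdd 1)

def genH (ℓ v : ℕ) : Fin (v - 1) ⊕ Fin ℓ → FreeGroup (Fin (ℓ + 2)) :=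
  Sum.elim
    (fun i => FreeGroup.of 0 ^ (i : ℤ) * FreeGroup.of 1 * FreeGroup.of 0 ^ (-((i : ℤ) + 1)))
    (fun k => FreeGroup.of (k.addNat 2))

def genHLampPos (ℓ v : ℕ) : Fin (v - 1) ⊕ Fin ℓ → Multiplicative ℤ :=
  Sum.elim (fun i => ofAdd (i : ℤ)) (fun k => ofAdd (-((k : ℤ) + 2)))

theorem range_genH (ℓ v : ℕ) (hv : 2 ≤ v) :
    range (genH ℓ v) =
      {g | ∃ i : ℕ, i ≤ v - 2 ∧ g = FreeGroup.of 0 ^ (i : ℤ) * FreeGroup.of 1 *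
        FreeGroup.of 0 ^ (-((i : ℤ) + 1))} ∪
      {g | ∃ j : Fin (ℓ + 2), 2 ≤ (j : ℕ) ∧ g = FreeGroup.of j} := by
  ext g
  simp only [genH, mem_union, mem_range, Sum.exists, Sum.elim_inl, Sum.elim_inr, mem_ofPred_eq]
  refine or_congr ⟨?_, ?_⟩ ⟨?_, ?_⟩
  · rintro ⟨i, rfl⟩
    exact ⟨i, by omega, rfl⟩
  · rintro ⟨i, hi, rfl⟩
    exact ⟨⟨i, by omega⟩, rfl⟩
  · rintro ⟨k, rfl⟩
    exact ⟨k.addNat 2, by simp, rfl⟩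
  · rintro ⟨j, hj, rfl⟩
    exact ⟨j.subNat 2 hj, by rw [Fin.addNat_subNat]⟩

theorem genHLampPos_injective (ℓ v : ℕ) : Function.Injective (genHLampPos ℓ v) := by
  refine Function.Injective.sumElim ?_ ?_ ?_
  · intro i j h
    simpa [Fin.ext_iff] using h
  · intro i j h
    simpa [Fin.ext_iff] using h
  · intro i k h
    have := congrArg toAdd h
    simp at this
    omega

theorem lift_lampGen_genH (ℓ v : ℕ) (i : Fin (v - 1) ⊕ Fin ℓ) :
    FreeGroup.lift (lampGen ℓ) (genH ℓ v i) = lamp (genHLampPos ℓ v i) (ofAdd 1) := by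
  rcases i with i | k
  · have h0 : lampGen ℓ 0 = inl (ofAdd 1) := rfl
    have h1 : lampGen ℓ 1 = lamp 1 (ofAdd 1) * inl (ofAdd 1) := by simp [lampGen]
    have hpow : ∀ n : ℤ, (inl (ofAdd 1) : Multiplicative ℤ ≀ᵣ Multiplicative ℤ) ^ n
        = inl (ofAdd n) := fun n => by rw [← map_zpow, ← ofAdd_zsmul, smul_eq_mul, mul_one]
    have hexp : (1 : ℤ) + -((i : ℤ) + 1) = -(i : ℤ) := by ring
    simp only [genH, genHLampPos, Sum.elim_inl, map_mul, map_zpow, FreeGroup.lift_apply_of, h0, h1]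
    rw [hpow, hpow, ← mul_assoc (inl _) (lamp _ _), mul_assoc _ (inl _), ← map_mul, ← ofAdd_add,
      hexp, ofAdd_neg, map_inv, inl_mul_lamp_mul_inl_inv, mul_one]
  · have hk : lampGen ℓ (k.addNat 2) = lamp (ofAdd (-((k : ℤ) + 2))) (ofAdd 1) := by
      simp [lampGen]
    simp only [genH, genHLampPos, Sum.elim_inr, FreeGroup.lift_apply_of, hk]

theorem rank_closure_range_genH (ℓ v : ℕ) :
    Group.rank (closure (range (genH ℓ v))) = v - 1 + ℓ := by
  set H := closure (range (genH ℓ v))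
  let ψ := FreeGroup.lift (lampGen ℓ)
  have hH : H ≤ (rightHom.comp ψ).ker := by
    rw [closure_le]
    rintro _ ⟨i, rfl⟩
    simp [ψ, lift_lampGen_genH]
  let θ : H →* Multiplicative (Multiplicative ℤ → ℤ) :=
    (MulEquiv.funMultiplicative _ ℤ).symm.toMonoidHom.comp
      (baseHom.comp ((ψ.comp H.subtype).codRestrict _ fun h => hH h.2))
  have hθ : (fun i => toAdd (θ ⟨genH ℓ v i, subset_closure (mem_range_self i)⟩))
      = fun i => Pi.single (genHLampPos ℓ v i) 1 := by
    funext i q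
    change toAdd ((ψ (genH ℓ v i)).left q) = _
    rw [lift_lampGen_genH, left_lamp, Pi.mulSingle_apply, Pi.single_apply]
    split_ifs <;> rfl
  refine (rank_closure_range_eq_card (genH ℓ v) θ ?_).trans (by simp)
  rw [hθ]
  exact (Pi.linearIndependent_single_one _ ℤ).comp _ (genHLampPos_injective ℓ v)

/-- With `H = ⟨x₁ⁱx₂x₁^{-(i+1)} (0 ≤ i ≤ v-2), x₃, …, x_{ℓ+2}⟩` and `K = ⟨x₁, x₂⟩`
in the free group on `x₁, …, x_{ℓ+2}`, we have `r̄(H) = v + ℓ - 2`, `r̄(K) = 1`,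
`rank(H) = v + ℓ - 1` and `rank(K) = 2`. -/
theorem rbar_H_and_K (ℓ v : ℕ) (hv : 2 ≤ v)
    (x₁ x₂ : FreeGroup (Fin (ℓ + 2)))
    (hx₁ : x₁ = FreeGroup.of ⟨0, by omega⟩)
    (hx₂ : x₂ = FreeGroup.of ⟨1, by omega⟩)
    (H K : Subgroup (FreeGroup (Fin (ℓ + 2))))
    (hH : H = Subgroup.closure
      ({g | ∃ i : ℕ, i ≤ v - 2 ∧ g = x₁ ^ (i : ℤ) * x₂ * x₁ ^ (-((i : ℤ) + 1))} ∪
       {g | ∃ j : Fin (ℓ + 2), 2 ≤ (j : ℕ) ∧ g = FreeGroup.of j}))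
    (hK : K = Subgroup.closure {x₁, x₂}) :
    rbar ↥H = v + ℓ - 2 ∧ rbar ↥K = 1 ∧ grank ↥H = v + ℓ - 1 ∧ grank ↥K = 2 := by
  have hp : Function.Injective (![0, 1] : Fin 2 → Fin (ℓ + 2)) := by
    intro i j h
    fin_cases i <;> fin_cases j <;> simp_all
  have hK' : K = closure (range (FreeGroup.of ∘ ![0, 1])) := by
    rw [hK, hx₁, hx₂, range_comp, Matrix.range_cons_cons_empty, image_pair]
    rfl
  have hrankH : grank H = v - 1 + ℓ := by
    have hx₁' : x₁ = FreeGroup.of 0 := hx₁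
    have hx₂' : x₂ = FreeGroup.of 1 := hx₂
    rw [hH, hx₁', hx₂', ← range_genH ℓ v hv, grank_eq_rank, rank_closure_range_genH]
  have hrankK : grank K = 2 := by
    rw [hK', grank_eq_rank, FreeGroup.rank_closure_range_of hp, Fintype.card_fin]
  simp only [rbar, hrankH, hrankK, true_and, and_true]
  omega
end

section
/- Let F be the free group on six generators a, b, c, d, x, y. Let H be the subgroup generated by {a, b, x, y², y x y⁻¹} and K the subgroup generated by {c, d, y, x², x y x⁻¹}. Then H ∩ K is the subgroup generated by {y², y x² y⁻¹, x², y x y⁻¹ x, y x y x}. -/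
/-!
Sending `c` and `d` to `1` retracts `F` onto `⟨a, b, x, y⟩`; it fixes `H` and maps `K` into
`L = ⟨x, y⟩`, so `H ∩ K ≤ L`. Every element of `H` has even exponent sum in `y` and every
element of `K` has even exponent sum in `x`, so `H ∩ K` lies in the kernel of the parity map
`L → (ℤ/2)²`. Let `J` be the subgroup generated by the five given elements, all of which have
even parities. Left multiplication by `x^±1` and `y^±1` maps `{1, x, y, yx} * J` into itself,
hence `L = {1, x, y, yx} * J`; as `1` is the only one of these representatives with trivial
parities, the kernel is `J`. Conversely, each of the five elements lies in both `H` and `K`.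
-/

open scoped Pointwise

namespace Subgroup

variable {G : Type*} [Group G]

theorem closure_subset_mul_of_mul_subset {S R : Set G} {J : Subgroup G} (hR : (1 : G) ∈ R)
    (hS : S * R ⊆ R * (J : Set G)) (hS' : S⁻¹ * R ⊆ R * (J : Set G)) :
    (closure S : Set G) ⊆ R * (J : Set G) := by
  have stable {T : Set G} (hT : T * R ⊆ R * (J : Set G)) {g w : G} (hg : g ∈ T)
      (hw : w ∈ R * (J : Set G)) : g * w ∈ R * (J : Set G) := by
    have : T * (R * (J : Set G)) ⊆ R * (J : Set G) := calc
      T * (R * (J : Set G)) = T * R * (J : Set G) := (mul_assoc _ _ _).symm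
      _ ⊆ R * (J : Set G) * (J : Set G) := Set.mul_subset_mul_right hT
      _ = R * (J : Set G) := by rw [mul_assoc, coe_mul_coe]
    exact this (Set.mul_mem_mul hg hw)
  intro w hw
  induction hw using closure_induction_left with
  | one => exact ⟨1, hR, 1, J.one_mem, one_mul 1⟩
  | mul_left g hg w _ ih => exact stable hS hg ih
  | inv_mul_cancel g hg w _ ih => exact stable hS' (Set.inv_mem_inv.2 hg) ih

theorem closure_inf_ker_le {M : Type*} [MulOneClass M] {f : G →* M} {S R : Set G}
    {J : Subgroup G} (hR : (1 : G) ∈ R) (hS : S * R ⊆ R * (J : Set G))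
    (hS' : S⁻¹ * R ⊆ R * (J : Set G)) (hJ : J ≤ f.ker)
    (hRJ : ∀ r ∈ R, f r = 1 → r ∈ J) :
    closure S ⊓ f.ker ≤ J := by
  rintro w ⟨hwS, hwf⟩
  obtain ⟨r, hr, j, hj, rfl⟩ := closure_subset_mul_of_mul_subset hR hS hS' hwS
  have hfr : f r = 1 := by simpa [MonoidHom.mem_ker.1 (hJ hj)] using hwf
  exact J.mul_mem (hRJ r hr hfr) hj

theorem inf_le_of_retraction {H K L : Subgroup G} (ρ : G →* G) (hH : ∀ h ∈ H, ρ h = h)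
    (hK : K.map ρ ≤ L) : H ⊓ K ≤ L :=
  fun w ⟨hwH, hwK⟩ => hH w hwH ▸ hK ⟨w, hwK, rfl⟩

end Subgroup

theorem Multiplicative.zmodTwo_mul_self_eq_one (m : Multiplicative (ZMod 2)) : m * m = 1 := by
  revert m; decide

def FreeGroup.letterParity {α : Type*} [DecidableEq α] (i : α) :
    FreeGroup α →* Multiplicative (ZMod 2) :=
  FreeGroup.lift (Pi.mulSingle i (Multiplicative.ofAdd 1))

namespace Guzman

open Subgroup FreeGroup

abbrev a : FreeGroup (Fin 6) := of 0
abbrev b : FreeGroup (Fin 6) := of 1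
abbrev c : FreeGroup (Fin 6) := of 2
abbrev d : FreeGroup (Fin 6) := of 3
abbrev x : FreeGroup (Fin 6) := of 4
abbrev y : FreeGroup (Fin 6) := of 5

def H : Subgroup (FreeGroup (Fin 6)) := closure {a, b, x, y ^ 2, y * x * y⁻¹}
def K : Subgroup (FreeGroup (Fin 6)) := closure {c, d, y, x ^ 2, x * y * x⁻¹}
def J : Subgroup (FreeGroup (Fin 6)) :=
  closure {y ^ 2, y * x ^ 2 * y⁻¹, x ^ 2, y * x * y⁻¹ * x, y * x * y * x}
def L : Subgroup (FreeGroup (Fin 6)) := closure {x, y}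

def transversal : Set (FreeGroup (Fin 6)) := {1, x, y, y * x}

def parity : FreeGroup (Fin 6) →* Multiplicative (ZMod 2) × Multiplicative (ZMod 2) :=
  (letterParity 4).prod (letterParity 5)

def retraction : FreeGroup (Fin 6) →* FreeGroup (Fin 6) :=
  FreeGroup.lift fun i => if i = 2 ∨ i = 3 then 1 else of i

theorem x_sq_mem_J : x ^ 2 ∈ J := subset_closure (by simp)

theorem y_sq_mem_J : y ^ 2 ∈ J := subset_closure (by simp)

theorem commutator_mem_J : x⁻¹ * y⁻¹ * x * y ∈ J := by
  rw [show x⁻¹ * y⁻¹ * x * y = (y * x * y * x)⁻¹ * (y * x ^ 2 * y⁻¹) * y ^ 2 by group]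
  exact mul_mem (mul_mem (inv_mem (subset_closure (by simp))) (subset_closure (by simp)))
    y_sq_mem_J

theorem inv_y_mul_x_mul_y_mul_x_mem_J : y⁻¹ * x * y * x ∈ J := by
  rw [show y⁻¹ * x * y * x = (y ^ 2)⁻¹ * (y * x * y * x) by group]
  exact mul_mem (inv_mem y_sq_mem_J) (subset_closure (by simp))

theorem conj_y_sq_mem_J : x⁻¹ * y ^ 2 * x ∈ J := by
  rw [show x⁻¹ * y ^ 2 * x = (y * x * y⁻¹ * x)⁻¹ * (y * x * y * x) by
    simp only [sq]; group]
  exact mul_mem (inv_mem (subset_closure (by simp))) (subset_closure (by simp))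

theorem mul_transversal_subset : {x, y} * transversal ⊆ transversal * (J : Set _) := by
  rw [Set.mul_subset_iff]
  rintro g (rfl | rfl) r (rfl | rfl | rfl | rfl)
  · exact ⟨x, by simp [transversal], 1, J.one_mem, by group⟩
  · exact ⟨1, by simp [transversal], _, x_sq_mem_J, by simp only [sq]; group⟩
  · exact ⟨y * x, by simp [transversal], _, commutator_mem_J, by group⟩
  · exact ⟨y, by simp [transversal], _, inv_y_mul_x_mul_y_mul_x_mem_J, by group⟩
  · exact ⟨y, by simp [transversal], 1, J.one_mem, by group⟩
  · exact ⟨y * x, by simp [transversal], 1, J.one_mem, by group⟩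
  · exact ⟨1, by simp [transversal], _, y_sq_mem_J, by simp only [sq]; group⟩
  · exact ⟨x, by simp [transversal], _, conj_y_sq_mem_J, by simp only [sq]; group⟩

theorem inv_mul_transversal_subset : {x, y}⁻¹ * transversal ⊆ transversal * (J : Set _) := by
  rw [Set.inv_insert, Set.inv_singleton, Set.mul_subset_iff]
  rintro g (rfl | rfl) r (rfl | rfl | rfl | rfl)
  · exact ⟨x, by simp [transversal], _, inv_mem x_sq_mem_J, by group⟩
  · exact ⟨1, by simp [transversal], 1, J.one_mem, by group⟩
  · exact ⟨y * x, by simp [transversal], _, inv_mem inv_y_mul_x_mul_y_mul_x_mem_J, by group⟩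
  · exact ⟨y, by simp [transversal], _, inv_mem commutator_mem_J, by group⟩
  · exact ⟨y, by simp [transversal], _, inv_mem y_sq_mem_J, by group⟩
  · exact ⟨y * x, by simp [transversal], _, inv_mem conj_y_sq_mem_J, by group⟩
  · exact ⟨1, by simp [transversal], 1, J.one_mem, by group⟩
  · exact ⟨x, by simp [transversal], 1, J.one_mem, by group⟩

theorem J_le_ker_parity : J ≤ parity.ker := by
  rw [J, closure_le]
  simp [Set.insert_subset_iff, parity, letterParity, sq, Multiplicative.zmodTwo_mul_self_eq_one]

theorem mem_J_of_mem_transversal (r : FreeGroup (Fin 6)) (hr : r ∈ transversal)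
    (h : parity r = 1) : r ∈ J := by
  rcases hr with rfl | rfl | rfl | rfl
  · exact J.one_mem
  all_goals simp [parity, letterParity] at h

theorem L_inf_ker_parity_le_J : L ⊓ parity.ker ≤ J :=
  closure_inf_ker_le (by simp [transversal]) mul_transversal_subset inv_mul_transversal_subset
    J_le_ker_parity mem_J_of_mem_transversal

theorem H_le_ker : H ≤ (letterParity 5).ker := by
  rw [H, closure_le]
  simp [Set.insert_subset_iff, letterParity, sq, Multiplicative.zmodTwo_mul_self_eq_one]

theorem K_le_ker : K ≤ (letterParity 4).ker := by
  rw [K, closure_le]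
  simp [Set.insert_subset_iff, letterParity, sq, Multiplicative.zmodTwo_mul_self_eq_one]

theorem retraction_eq_self_of_mem_H : ∀ h ∈ H, retraction h = h :=
  fun _ hh => MonoidHom.eqOn_closure (f := retraction) (g := MonoidHom.id _)
    (by simp [Set.EqOn, retraction]) hh

theorem map_K_le_L : K.map retraction ≤ L := by
  have hx : x ∈ L := subset_closure (by simp)
  have hy : y ∈ L := subset_closure (by simp)
  have hx2 : x ^ 2 ∈ L := pow_mem hx 2
  have hxyx : x * y * x⁻¹ ∈ L := mul_mem (mul_mem hx hy) (inv_mem hx)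
  rw [K, MonoidHom.map_closure, closure_le]
  simp [Set.insert_subset_iff, retraction, hy, hx2, hxyx]

theorem J_le_H : J ≤ H := by
  have hx : x ∈ H := subset_closure (by simp)
  have hy2 : y ^ 2 ∈ H := subset_closure (by simp)
  have hz : y * x * y⁻¹ ∈ H := subset_closure (by simp)
  rw [J, closure_le]
  simp only [Set.insert_subset_iff, Set.singleton_subset_iff, SetLike.mem_coe]
  refine ⟨hy2, ?_, pow_mem hx 2, mul_mem hz hx, ?_⟩
  · rw [show y * x ^ 2 * y⁻¹ = y * x * y⁻¹ * (y * x * y⁻¹) by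
      simp only [sq]; group]
    exact mul_mem hz hz
  · rw [show y * x * y * x = y * x * y⁻¹ * y ^ 2 * x by group]
    exact mul_mem (mul_mem hz hy2) hx

theorem J_le_K : J ≤ K := by
  have hy : y ∈ K := subset_closure (by simp)
  have hx2 : x ^ 2 ∈ K := subset_closure (by simp)
  have hw : x * y * x⁻¹ ∈ K := subset_closure (by simp)
  rw [J, closure_le]
  simp only [Set.insert_subset_iff, Set.singleton_subset_iff, SetLike.mem_coe]
  refine ⟨pow_mem hy 2, mul_mem (mul_mem hy hx2) (inv_mem hy), hx2, ?_, ?_⟩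
  · rw [show y * x * y⁻¹ * x = y * (x * y * x⁻¹)⁻¹ * x ^ 2 by group]
    exact mul_mem (mul_mem hy (inv_mem hw)) hx2
  · rw [show y * x * y * x = y * (x * y * x⁻¹) * x ^ 2 by group]
    exact mul_mem (mul_mem hy hw) hx2

end Guzman

/-- In the free group on `a, b, c, d, x, y`, with `H = ⟨a, b, x, y², yxy⁻¹⟩` and
`K = ⟨c, d, y, x², xyx⁻¹⟩`, the intersection `H ∩ K` is generated by
`{y², yx²y⁻¹, x², yxy⁻¹x, yxyx}`. -/
theorem guzman_inf_eq (a b c d x y : FreeGroup (Fin 6))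
    (ha : a = FreeGroup.of 0) (hb : b = FreeGroup.of 1)
    (hc : c = FreeGroup.of 2) (hd : d = FreeGroup.of 3)
    (hx : x = FreeGroup.of 4) (hy : y = FreeGroup.of 5)
    (H K : Subgroup (FreeGroup (Fin 6)))
    (hH : H = Subgroup.closure {a, b, x, y ^ 2, y * x * y⁻¹})
    (hK : K = Subgroup.closure {c, d, y, x ^ 2, x * y * x⁻¹}) :
    H ⊓ K = Subgroup.closure
      {y ^ 2, y * x ^ 2 * y⁻¹, x ^ 2, y * x * y⁻¹ * x, y * x * y * x} := by
  subst ha hb hc hd hx hy hH hK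
  refine le_antisymm (fun w hw => ?_) (le_inf Guzman.J_le_H Guzman.J_le_K)
  have hwL : w ∈ Guzman.L := Subgroup.inf_le_of_retraction Guzman.retraction
    Guzman.retraction_eq_self_of_mem_H Guzman.map_K_le_L hw
  have hw_even : w ∈ Guzman.parity.ker := by
    rw [Guzman.parity, MonoidHom.ker_prod]
    exact ⟨Guzman.K_le_ker hw.2, Guzman.H_le_ker hw.1⟩
  exact Guzman.L_inf_ker_parity_le_J ⟨hwL, hw_even⟩
end
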